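/- arXiv:0806.0524 — 2 statements merged into one kernel-verified Lean document; each statement's English description precedes it below -/
import Mathlib

section
/- For every positive integer n, the cube of side length 3n can be tiled by trominoes. -/
/-- Standard basis vectors of `ℤ³`. -/
def e3 : Fin 3 → ℤ × ℤ × ℤ
  | 0 => (1, 0, 0)
  | 1 => (0, 1, 0)
  | 2 => (0, 0, 1)

/-- A 3D L-tromino: a cell together with two cells adjacent to it along two
different coordinate axes (equivalently, a translate/axis-rotation of
`{(0,0,0),(1,0,0),(0,1,0)}`). -/
def IsTromino3 (s : Finset (ℤ × ℤ × ℤ)) : Prop :=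
  ∃ (c : ℤ × ℤ × ℤ) (i j : Fin 3) (ε₁ ε₂ : ℤ), i ≠ j ∧
    (ε₁ = 1 ∨ ε₁ = -1) ∧ (ε₂ = 1 ∨ ε₂ = -1) ∧
    s = {c, c + ε₁ • e3 i, c + ε₂ • e3 j}

/-- The axis-aligned box `[0,a) × [0,b) × [0,c)` in `ℤ³`. -/
noncomputable def box (a b c : ℕ) : Finset (ℤ × ℤ × ℤ) :=
  (Finset.Ico (0 : ℤ) a) ×ˢ (Finset.Ico (0 : ℤ) b) ×ˢ (Finset.Ico (0 : ℤ) c)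

/-- `T` is a tiling of the region `R` by 3D trominoes: the trominoes are
pairwise disjoint and their union is exactly `R`. -/
def IsTiling3 (R : Finset (ℤ × ℤ × ℤ)) (T : Finset (Finset (ℤ × ℤ × ℤ))) : Prop :=
  (∀ t ∈ T, IsTromino3 t) ∧
    (∀ t₁ ∈ T, ∀ t₂ ∈ T, t₁ ≠ t₂ → Disjoint t₁ t₂) ∧
    (∀ x, x ∈ R ↔ ∃ t ∈ T, x ∈ t)

/-!
Nine trominoes tile the cube `[0,3)³`; this explicit tiling is checked by `decide`, tromino-ness
being decidable once the corner is sought inside the set. The translates of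
`[0,3)³` by the vectors `3 • i`, `i ∈ [0,n)³`, partition `[0,3n)³`: a cell `x` lies in the
translate indexed by its componentwise quotient `x / 3`. Translating the tiling of the small cube
into each of them tiles the large one.
-/

open Pointwise

theorem mem_box {a b c : ℕ} {x : ℤ × ℤ × ℤ} :
    x ∈ box a b c ↔ (0 ≤ x.1 ∧ x.1 < a) ∧ (0 ≤ x.2.1 ∧ x.2.1 < b) ∧ (0 ≤ x.2.2 ∧ x.2.2 < c) := by
  simp only [box, Finset.mem_product, Finset.mem_Ico]

theorem isTromino3_iff_exists_mem (s : Finset (ℤ × ℤ × ℤ)) :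
    IsTromino3 s ↔ ∃ c ∈ s, ∃ i j : Fin 3, ∃ ε₁ ∈ ({1, -1} : Finset ℤ), ∃ ε₂ ∈ ({1, -1} : Finset ℤ),
      i ≠ j ∧ s = {c, c + ε₁ • e3 i, c + ε₂ • e3 j} := by
  constructor
  · rintro ⟨c, i, j, ε₁, ε₂, hij, hε₁, hε₂, rfl⟩
    exact ⟨c, Finset.mem_insert_self _ _, i, j, ε₁, by simpa using hε₁, ε₂, by simpa using hε₂,
      hij, rfl⟩
  · rintro ⟨c, -, i, j, ε₁, hε₁, ε₂, hε₂, hij, rfl⟩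
    exact ⟨c, i, j, ε₁, ε₂, hij, by simpa using hε₁, by simpa using hε₂, rfl⟩

instance : DecidablePred IsTromino3 := fun s =>
  decidable_of_iff _ (isTromino3_iff_exists_mem s).symm

theorem IsTromino3.vadd {s : Finset (ℤ × ℤ × ℤ)} (hs : IsTromino3 s) (v : ℤ × ℤ × ℤ) :
    IsTromino3 (v +ᵥ s) := by
  obtain ⟨c, i, j, ε₁, ε₂, hij, hε₁, hε₂, rfl⟩ := hs
  refine ⟨v + c, i, j, ε₁, ε₂, hij, hε₁, hε₂, ?_⟩
  simp only [Finset.vadd_finset_insert, Finset.vadd_finset_singleton, vadd_eq_add, add_assoc]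

theorem isTiling3_iff_eq_biUnion (R : Finset (ℤ × ℤ × ℤ)) (T : Finset (Finset (ℤ × ℤ × ℤ))) :
    IsTiling3 R T ↔ (∀ t ∈ T, IsTromino3 t) ∧
      (∀ t₁ ∈ T, ∀ t₂ ∈ T, t₁ ≠ t₂ → Disjoint t₁ t₂) ∧ R = T.biUnion id := by
  simp only [IsTiling3, Finset.ext_iff, Finset.mem_biUnion, id]

theorem IsTiling3.subset {R : Finset (ℤ × ℤ × ℤ)} {T : Finset (Finset (ℤ × ℤ × ℤ))}
    (hT : IsTiling3 R T) {t : Finset (ℤ × ℤ × ℤ)} (ht : t ∈ T) : t ⊆ R :=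
  fun _ hx => (hT.2.2 _).2 ⟨t, ht, hx⟩

theorem IsTiling3.biUnion_vadd {ι : Type*} {R : Finset (ℤ × ℤ × ℤ)}
    {T : Finset (Finset (ℤ × ℤ × ℤ))} (hT : IsTiling3 R T) (I : Finset ι) (v : ι → ℤ × ℤ × ℤ)
    (hI : (I : Set ι).PairwiseDisjoint fun i => v i +ᵥ R) :
    IsTiling3 (I.biUnion fun i => v i +ᵥ R) (I.biUnion fun i => v i +ᵥ T) := by
  simp only [IsTiling3, Finset.mem_biUnion, Finset.mem_vadd_finset, vadd_eq_add]
  refine ⟨?_, ?_, ?_⟩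
  · rintro _ ⟨i, -, s, hs, rfl⟩
    exact (hT.1 s hs).vadd (v i)
  · rintro _ ⟨i, hi, s₁, hs₁, rfl⟩ _ ⟨j, hj, s₂, hs₂, rfl⟩ hne
    by_cases hij : i = j
    · subst hij
      have hs : s₁ ≠ s₂ := by rintro rfl; exact hne rfl
      rw [← Finset.disjoint_coe, Finset.coe_vadd_finset, Finset.coe_vadd_finset,
        Set.disjoint_vadd_set, Finset.disjoint_coe]
      exact hT.2.1 s₁ hs₁ s₂ hs₂ hs
    · exact (hI hi hj hij).mono (Finset.vadd_finset_subset_vadd_finset (hT.subset hs₁))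
        (Finset.vadd_finset_subset_vadd_finset (hT.subset hs₂))
  · intro x
    constructor
    · rintro ⟨i, hi, y, hy, rfl⟩
      obtain ⟨s, hs, hys⟩ := (hT.2.2 y).1 hy
      exact ⟨v i +ᵥ s, ⟨i, hi, s, hs, rfl⟩, Finset.vadd_mem_vadd_finset hys⟩
    · rintro ⟨_, ⟨i, hi, s, hs, rfl⟩, hx⟩
      obtain ⟨y, hy, rfl⟩ := Finset.mem_vadd_finset.1 hx
      exact ⟨i, hi, y, hT.subset hs hy, rfl⟩

def cubeTiling : Finset (Finset (ℤ × ℤ × ℤ)) :=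
  {{(0,0,0), (0,1,0), (1,0,0)}, {(0,0,1), (0,0,2), (1,0,2)}, {(0,1,1), (0,2,0), (0,2,1)},
   {(0,1,2), (0,2,2), (1,2,2)}, {(1,0,1), (2,0,1), (2,0,2)}, {(1,1,0), (1,2,0), (2,2,0)},
   {(1,1,1), (1,2,1), (2,2,1)}, {(1,1,2), (2,1,2), (2,2,2)}, {(2,0,0), (2,1,0), (2,1,1)}}

theorem isTiling3_box_three : IsTiling3 (box 3 3 3) cubeTiling :=
  (isTiling3_iff_eq_biUnion _ _).2 (by decide)

theorem mem_vadd_box_iff {a b c : ℕ} (ha : 0 < a) (hb : 0 < b) (hc : 0 < c)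
    (i x : ℤ × ℤ × ℤ) :
    x ∈ ((a : ℤ), (b : ℤ), (c : ℤ)) * i +ᵥ box a b c ↔ x / ((a : ℤ), (b : ℤ), (c : ℤ)) = i := by
  rw [← Finset.neg_vadd_mem_iff, mem_box]
  obtain ⟨x₁, x₂, x₃⟩ := x
  obtain ⟨i₁, i₂, i₃⟩ := i
  simp only [Prod.ext_iff, Prod.fst_div, Prod.snd_div, vadd_eq_add, Prod.fst_add, Prod.snd_add,
    Prod.fst_neg, Prod.snd_neg, Prod.fst_mul, Prod.snd_mul]
  rw [Int.ediv_eq_iff_of_pos (by omega), Int.ediv_eq_iff_of_pos (by omega),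
    Int.ediv_eq_iff_of_pos (by omega)]
  constructor <;> rintro ⟨⟨_, _⟩, ⟨_, _⟩, ⟨_, _⟩⟩ <;>
    refine ⟨⟨?_, ?_⟩, ⟨?_, ?_⟩, ⟨?_, ?_⟩⟩ <;> linarith

theorem box_mul_eq_biUnion {a b c : ℕ} (ha : 0 < a) (hb : 0 < b) (hc : 0 < c) (p q r : ℕ) :
    box (p * a) (q * b) (r * c) =
      (box p q r).biUnion fun i => ((a : ℤ), (b : ℤ), (c : ℤ)) * i +ᵥ box a b c := by
  ext x
  simp only [Finset.mem_biUnion, mem_vadd_box_iff ha hb hc, exists_eq_right', mem_box,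
    Prod.fst_div, Prod.snd_div, Int.ediv_nonneg_iff_of_pos, Int.ediv_lt_iff_lt_mul, Nat.cast_mul,
    Int.natCast_pos.2 ha, Int.natCast_pos.2 hb, Int.natCast_pos.2 hc]

theorem pairwiseDisjoint_vadd_box {a b c : ℕ} (ha : 0 < a) (hb : 0 < b) (hc : 0 < c)
    (S : Set (ℤ × ℤ × ℤ)) :
    S.PairwiseDisjoint fun i => ((a : ℤ), (b : ℤ), (c : ℤ)) * i +ᵥ box a b c := by
  intro i _ j _ hij
  refine Finset.disjoint_left.2 fun x hi hj => hij ?_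
  rw [mem_vadd_box_iff ha hb hc] at hi hj
  exact hi.symm.trans hj

theorem IsTiling3.exists_isTiling3_box_mul {a b c : ℕ} {T : Finset (Finset (ℤ × ℤ × ℤ))}
    (hT : IsTiling3 (box a b c) T) (ha : 0 < a) (hb : 0 < b) (hc : 0 < c) (p q r : ℕ) :
    ∃ T' : Finset (Finset (ℤ × ℤ × ℤ)), IsTiling3 (box (p * a) (q * b) (r * c)) T' := by
  rw [box_mul_eq_biUnion ha hb hc]
  exact ⟨_, hT.biUnion_vadd _ _ (pairwiseDisjoint_vadd_box ha hb hc _)⟩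

theorem tile_cube_three_n_general (n : ℕ) :
    ∃ T : Finset (Finset (ℤ × ℤ × ℤ)), IsTiling3 (box (3 * n) (3 * n) (3 * n)) T := by
  rw [mul_comm 3 n]
  exact isTiling3_box_three.exists_isTiling3_box_mul three_pos three_pos three_pos n n n

/-- For every positive integer `n`, the cube of side `3n` can be tiled by trominoes. -/
theorem tile_cube_three_n (n : ℕ) (hn : 0 < n) :
    ∃ T : Finset (Finset (ℤ × ℤ × ℤ)), IsTiling3 (box (3 * n) (3 * n) (3 * n)) T :=
  tile_cube_three_n_general n
end

section
/- For every cell c of the 4×4×4 cube, the cube with c removed can be tiled by three-dimensional trominoes (21 trominoes). -/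
def TrominoTileable (R : Finset (ℤ × ℤ × ℤ)) (n : ℕ) : Prop :=
  ∃ T : Finset (Finset (ℤ × ℤ × ℤ)), IsTiling3 R T ∧ T.card = n

lemma IsTromino3.nonempty {s : Finset (ℤ × ℤ × ℤ)} (h : IsTromino3 s) : s.Nonempty := by
  obtain ⟨c, -, -, -, -, -, -, -, rfl⟩ := h
  exact Finset.insert_nonempty _ _

lemma TrominoTileable.union {R₁ R₂ : Finset (ℤ × ℤ × ℤ)} {m n : ℕ}
    (h₁ : TrominoTileable R₁ m) (h₂ : TrominoTileable R₂ n) (hR : Disjoint R₁ R₂) :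
    TrominoTileable (R₁ ∪ R₂) (m + n) := by
  obtain ⟨T₁, ⟨htrom₁, hdisj₁, hcover₁⟩, rfl⟩ := h₁
  obtain ⟨T₂, ⟨htrom₂, hdisj₂, hcover₂⟩, rfl⟩ := h₂
  have hsub₁ : ∀ t ∈ T₁, t ⊆ R₁ := fun t ht x hx => (hcover₁ x).mpr ⟨t, ht, hx⟩
  have hsub₂ : ∀ t ∈ T₂, t ⊆ R₂ := fun t ht x hx => (hcover₂ x).mpr ⟨t, ht, hx⟩
  have hcross : ∀ t₁ ∈ T₁, ∀ t₂ ∈ T₂, Disjoint t₁ t₂ := fun t₁ ht₁ t₂ ht₂ =>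
    hR.mono (hsub₁ t₁ ht₁) (hsub₂ t₂ ht₂)
  have hT : Disjoint T₁ T₂ := Finset.disjoint_left.mpr fun t ht₁ ht₂ =>
    (htrom₁ t ht₁).nonempty.ne_empty (disjoint_self.mp (hcross t ht₁ t ht₂))
  refine ⟨T₁ ∪ T₂, ⟨?_, ?_, ?_⟩, Finset.card_union_of_disjoint hT⟩
  · simp only [Finset.mem_union]
    rintro t (ht | ht)
    exacts [htrom₁ t ht, htrom₂ t ht]
  · simp only [Finset.mem_union]
    rintro t₁ (ht₁ | ht₁) t₂ (ht₂ | ht₂) hne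
    exacts [hdisj₁ t₁ ht₁ t₂ ht₂ hne, hcross t₁ ht₁ t₂ ht₂, (hcross t₂ ht₂ t₁ ht₁).symm,
      hdisj₂ t₁ ht₁ t₂ ht₂ hne]
  · intro x
    simp only [Finset.mem_union, hcover₁, hcover₂, or_and_right, exists_or]

def IsAxisMap (f : ℤ × ℤ × ℤ → ℤ × ℤ × ℤ) : Prop :=
  ∃ (σ : Equiv.Perm (Fin 3)) (s : Fin 3 → ℤˣ),
    ∀ v i (ε : ℤ), f (v + ε • e3 i) = f v + (s i * ε) • e3 (σ i)

lemma IsTromino3.image {f : ℤ × ℤ × ℤ → ℤ × ℤ × ℤ} (hf : IsAxisMap f)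
    {s : Finset (ℤ × ℤ × ℤ)} (hs : IsTromino3 s) : IsTromino3 (s.image f) := by
  obtain ⟨σ, u, hσu⟩ := hf
  obtain ⟨c, i, j, ε₁, ε₂, hij, h₁, h₂, rfl⟩ := hs
  refine ⟨f c, σ i, σ j, u i * ε₁, u j * ε₂, σ.injective.ne hij, ?_, ?_, ?_⟩
  · exact Int.isUnit_iff.mp ((u i).isUnit.mul (Int.isUnit_iff.mpr h₁))
  · exact Int.isUnit_iff.mp ((u j).isUnit.mul (Int.isUnit_iff.mpr h₂))
  · simp only [Finset.image_insert, Finset.image_singleton, hσu]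

lemma TrominoTileable.image {R : Finset (ℤ × ℤ × ℤ)} {n : ℕ} (h : TrominoTileable R n)
    {f : ℤ × ℤ × ℤ → ℤ × ℤ × ℤ} (hinj : Function.Injective f) (hf : IsAxisMap f) :
    TrominoTileable (R.image f) n := by
  obtain ⟨T, ⟨htrom, hdisj, hcover⟩, rfl⟩ := h
  refine ⟨T.image (Finset.image f), ⟨?_, ?_, ?_⟩,
    Finset.card_image_of_injective _ (Finset.image_injective hinj)⟩
  · simp only [Finset.mem_image]
    rintro _ ⟨t, ht, rfl⟩
    exact (htrom t ht).image hf
  · simp only [Finset.mem_image]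
    rintro _ ⟨t₁, ht₁, rfl⟩ _ ⟨t₂, ht₂, rfl⟩ hne
    exact (Finset.disjoint_image hinj).mpr (hdisj t₁ ht₁ t₂ ht₂ (ne_of_apply_ne _ hne))
  · intro x
    simp only [Finset.mem_image, hcover]
    constructor
    · rintro ⟨y, ⟨t, ht, hy⟩, rfl⟩
      exact ⟨_, ⟨t, ht, rfl⟩, Finset.mem_image_of_mem f hy⟩
    · rintro ⟨_, ⟨t, ht, rfl⟩, hx⟩
      obtain ⟨y, hy, rfl⟩ := Finset.mem_image.mp hx
      exact ⟨y, ⟨t, ht, hy⟩, rfl⟩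

lemma TrominoTileable.erase_map {R : Finset (ℤ × ℤ × ℤ)} {c : ℤ × ℤ × ℤ} {n : ℕ}
    (h : TrominoTileable (R.erase c) n) {f : ℤ × ℤ × ℤ → ℤ × ℤ × ℤ}
    (hinj : Function.Injective f) (hf : IsAxisMap f) (hR : R.image f = R) :
    TrominoTileable (R.erase (f c)) n := by
  simpa only [Finset.image_erase hinj, hR] using h.image hinj hf

def IsCubeSymmetry (f : ℤ × ℤ × ℤ → ℤ × ℤ × ℤ) : Prop :=
  Function.Injective f ∧ IsAxisMap f ∧ (box 4 4 4).image f = box 4 4 4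

lemma TrominoTileable.erase_cubeSymmetry {c : ℤ × ℤ × ℤ} {n : ℕ}
    (h : TrominoTileable ((box 4 4 4).erase c) n) {f : ℤ × ℤ × ℤ → ℤ × ℤ × ℤ}
    (hf : IsCubeSymmetry f) : TrominoTileable ((box 4 4 4).erase (f c)) n :=
  h.erase_map hf.1 hf.2.1 hf.2.2

def flipX (v : ℤ × ℤ × ℤ) : ℤ × ℤ × ℤ := (3 - v.1, v.2.1, v.2.2)
def flipY (v : ℤ × ℤ × ℤ) : ℤ × ℤ × ℤ := (v.1, 3 - v.2.1, v.2.2)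
def flipZ (v : ℤ × ℤ × ℤ) : ℤ × ℤ × ℤ := (v.1, v.2.1, 3 - v.2.2)
def swapXZ (v : ℤ × ℤ × ℤ) : ℤ × ℤ × ℤ := (v.2.2, v.2.1, v.1)
def swapYZ (v : ℤ × ℤ × ℤ) : ℤ × ℤ × ℤ := (v.1, v.2.2, v.2.1)

lemma isCubeSymmetry_flipX : IsCubeSymmetry flipX := by
  refine ⟨Function.Involutive.injective fun v => by simp [flipX], ⟨1, ![-1, 1, 1], ?_⟩, by decide⟩
  rintro ⟨a, b, c⟩ i ε
  fin_cases i <;> simp [flipX, e3, sub_add_eq_sub_sub, ← sub_eq_add_neg]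

lemma isCubeSymmetry_flipY : IsCubeSymmetry flipY := by
  refine ⟨Function.Involutive.injective fun v => by simp [flipY], ⟨1, ![1, -1, 1], ?_⟩, by decide⟩
  rintro ⟨a, b, c⟩ i ε
  fin_cases i <;> simp [flipY, e3, sub_add_eq_sub_sub, ← sub_eq_add_neg]

lemma isCubeSymmetry_flipZ : IsCubeSymmetry flipZ := by
  refine ⟨Function.Involutive.injective fun v => by simp [flipZ], ⟨1, ![1, 1, -1], ?_⟩, by decide⟩
  rintro ⟨a, b, c⟩ i ε
  fin_cases i <;> simp [flipZ, e3, sub_add_eq_sub_sub, ← sub_eq_add_neg]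

lemma isCubeSymmetry_swapXZ : IsCubeSymmetry swapXZ := by
  refine ⟨Function.Involutive.injective fun v => rfl, ⟨Equiv.swap 0 2, 1, ?_⟩, by decide⟩
  rintro ⟨a, b, c⟩ i ε
  fin_cases i <;> simp [swapXZ, e3, Equiv.swap_apply_def]

lemma isCubeSymmetry_swapYZ : IsCubeSymmetry swapYZ := by
  refine ⟨Function.Involutive.injective fun v => rfl, ⟨Equiv.swap 1 2, 1, ?_⟩, by decide⟩
  rintro ⟨a, b, c⟩ i ε
  fin_cases i <;> simp [swapYZ, e3, Equiv.swap_apply_def]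

/-- The witnesses `(c, i, j, ε₁, ε₂)` of `IsTromino3`, with the signs as units of `ℤ`: a list of
these is a tiling that `decide` can check. -/
structure TrominoSpec where
  corner : ℤ × ℤ × ℤ
  i : Fin 3
  j : Fin 3
  ε₁ : ℤˣ
  ε₂ : ℤˣ

namespace TrominoSpec

def cells (t : TrominoSpec) : Finset (ℤ × ℤ × ℤ) :=
  {t.corner, t.corner + (t.ε₁ : ℤ) • e3 t.i, t.corner + (t.ε₂ : ℤ) • e3 t.j}

lemma isTromino3_cells (t : TrominoSpec) (h : t.i ≠ t.j) : IsTromino3 t.cells :=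
  ⟨t.corner, t.i, t.j, t.ε₁, t.ε₂, h, Int.isUnit_iff.mp t.ε₁.isUnit,
    Int.isUnit_iff.mp t.ε₂.isUnit, rfl⟩

end TrominoSpec

def IsTilingCertificate (R : Finset (ℤ × ℤ × ℤ)) (L : List TrominoSpec) : Prop :=
  (∀ t ∈ L, t.i ≠ t.j) ∧ (L.map TrominoSpec.cells).Pairwise Disjoint ∧
    R = (L.map TrominoSpec.cells).toFinset.biUnion id

instance (R : Finset (ℤ × ℤ × ℤ)) (L : List TrominoSpec) :
    Decidable (IsTilingCertificate R L) := by
  unfold IsTilingCertificate; infer_instance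

lemma IsTilingCertificate.trominoTileable {R : Finset (ℤ × ℤ × ℤ)} {L : List TrominoSpec}
    (h : IsTilingCertificate R L) : TrominoTileable R L.length := by
  obtain ⟨hij, hdisj, rfl⟩ := h
  have htrom : ∀ t ∈ L.map TrominoSpec.cells, IsTromino3 t := by
    simp only [List.mem_map]
    rintro _ ⟨t, ht, rfl⟩
    exact t.isTromino3_cells (hij t ht)
  have hnodup : (L.map TrominoSpec.cells).Nodup :=
    hdisj.imp_of_mem fun ha _ hab heq =>
      (htrom _ ha).nonempty.ne_empty (disjoint_self.mp (heq ▸ hab : Disjoint _ _))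
  refine ⟨_, ⟨fun t ht => htrom t (List.mem_toFinset.mp ht), ?_, ?_⟩, ?_⟩
  · intro t₁ ht₁ t₂ ht₂ hne
    exact hdisj.forall (List.mem_toFinset.mp ht₁) (List.mem_toFinset.mp ht₂) hne
  · simp
  · rw [List.toFinset_card_of_nodup hnodup, List.length_map]

lemma trominoTileable_square_erase {x y : ℤ} (hx : x = 0 ∨ x = 1) (hy : y = 0 ∨ y = 1) :
    TrominoTileable ((box 2 2 1).erase (x, y, 0)) 1 := by
  obtain rfl | rfl := hx <;> obtain rfl | rfl := hy
  · exact (by decide : IsTilingCertificate _ [⟨(1, 1, 0), 0, 1, -1, -1⟩]).trominoTileable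
  · exact (by decide : IsTilingCertificate _ [⟨(1, 0, 0), 0, 1, -1, 1⟩]).trominoTileable
  · exact (by decide : IsTilingCertificate _ [⟨(0, 1, 0), 0, 1, 1, -1⟩]).trominoTileable
  · exact (by decide : IsTilingCertificate _ [⟨(0, 0, 0), 0, 1, 1, 1⟩]).trominoTileable

/-- The other three quadrants of the layer, each without its cell at the centre of the layer,
and the central `2 × 2` square without `(1, 1, 0)`. -/
def frameTiling : List TrominoSpec :=
  [⟨(3, 0, 0), 0, 1, -1, 1⟩, ⟨(0, 3, 0), 0, 1, 1, -1⟩, ⟨(3, 3, 0), 0, 1, -1, -1⟩,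
   ⟨(2, 2, 0), 0, 1, -1, -1⟩]

lemma isTilingCertificate_frameTiling :
    IsTilingCertificate (box 4 4 1 \ box 2 2 1) frameTiling := by
  decide

def slabTiling : List TrominoSpec :=
  ([0, 2] ×ˢ [0, 1, 2, 3]).flatMap fun (x, y) =>
    [⟨(x, y, 1), 0, 2, 1, 1⟩, ⟨(x + 1, y, 3), 0, 2, -1, -1⟩]

lemma isTilingCertificate_slabTiling :
    IsTilingCertificate (Finset.Ico 0 4 ×ˢ Finset.Ico 0 4 ×ˢ Finset.Ico 1 4) slabTiling := by
  decide

lemma trominoTileable_cube_erase_bottom_corner {x y : ℤ} (hx : x = 0 ∨ x = 1)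
    (hy : y = 0 ∨ y = 1) : TrominoTileable ((box 4 4 4).erase (x, y, 0)) 21 := by
  have hregion : (box 4 4 4).erase (x, y, 0) =
      ((box 2 2 1).erase (x, y, 0) ∪ (box 4 4 1 \ box 2 2 1)) ∪
        (Finset.Ico 0 4 ×ˢ Finset.Ico 0 4 ×ˢ Finset.Ico 1 4) := by
    ext ⟨a, b, c⟩
    simp only [box, Finset.mem_erase, Finset.mem_union, Finset.mem_sdiff, Finset.mem_product,
      Finset.mem_Ico, ne_eq, Prod.mk.injEq, Nat.cast_ofNat, Nat.cast_one]
    omega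
  have hlayer_slab : Disjoint ((box 2 2 1).erase (x, y, 0) ∪ (box 4 4 1 \ box 2 2 1))
      (Finset.Ico 0 4 ×ˢ Finset.Ico 0 4 ×ˢ Finset.Ico 1 4) := by
    rw [Finset.disjoint_left]
    rintro ⟨a, b, c⟩ h
    simp only [box, Finset.mem_erase, Finset.mem_union, Finset.mem_sdiff, Finset.mem_product,
      Finset.mem_Ico, Nat.cast_ofNat, Nat.cast_one] at h ⊢
    omega
  rw [hregion]
  exact ((trominoTileable_square_erase hx hy).union
    isTilingCertificate_frameTiling.trominoTileable
    (Finset.disjoint_sdiff.mono_left (Finset.erase_subset _ _))).union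
    isTilingCertificate_slabTiling.trominoTileable hlayer_slab

def innerCellTiling : List TrominoSpec :=
  [⟨(0, 2, 3), 0, 1, 1, 1⟩, ⟨(1, 3, 2), 0, 2, 1, 1⟩, ⟨(2, 2, 3), 0, 1, 1, 1⟩,
   ⟨(3, 3, 2), 1, 2, -1, 1⟩, ⟨(0, 2, 2), 0, 1, 1, 1⟩, ⟨(2, 0, 3), 0, 1, 1, 1⟩,
   ⟨(3, 1, 2), 0, 2, -1, 1⟩, ⟨(2, 0, 2), 0, 2, 1, -1⟩, ⟨(2, 2, 1), 0, 2, 1, 1⟩,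
   ⟨(2, 3, 1), 0, 2, 1, -1⟩, ⟨(3, 2, 0), 0, 1, -1, 1⟩, ⟨(3, 0, 0), 0, 2, -1, 1⟩,
   ⟨(3, 1, 1), 0, 2, -1, -1⟩, ⟨(1, 1, 0), 0, 1, 1, 1⟩, ⟨(0, 0, 0), 0, 1, 1, 1⟩,
   ⟨(0, 3, 0), 0, 1, 1, -1⟩, ⟨(1, 3, 1), 0, 1, -1, -1⟩, ⟨(0, 1, 1), 1, 2, 1, 1⟩,
   ⟨(0, 0, 1), 0, 2, 1, 1⟩, ⟨(0, 0, 3), 0, 1, 1, 1⟩, ⟨(1, 1, 2), 1, 2, -1, 1⟩]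

lemma isTilingCertificate_innerCellTiling :
    IsTilingCertificate ((box 4 4 4).erase (1, 1, 1)) innerCellTiling := by
  decide

/-- Every singly deficient `4×4×4` cube can be tiled by 21 3D trominoes. -/
theorem tile_deficient_cube_4 (c : ℤ × ℤ × ℤ) (hc : c ∈ box 4 4 4) :
    ∃ T : Finset (Finset (ℤ × ℤ × ℤ)),
      IsTiling3 ((box 4 4 4).erase c) T ∧ T.card = 21 := by
  obtain ⟨x, y, z⟩ := c
  simp only [box, Finset.mem_product, Finset.mem_Ico, Nat.cast_ofNat] at hc
  change TrominoTileable _ 21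
  wlog hx : x ≤ 1 generalizing x
  · simpa [flipX] using
      (this (3 - x) (by omega) (by omega)).erase_cubeSymmetry isCubeSymmetry_flipX
  wlog hy : y ≤ 1 generalizing y
  · simpa [flipY] using
      (this (3 - y) (by omega) (by omega)).erase_cubeSymmetry isCubeSymmetry_flipY
  wlog hz : z ≤ 1 generalizing z
  · simpa [flipZ] using
      (this (3 - z) (by omega) (by omega)).erase_cubeSymmetry isCubeSymmetry_flipZ
  obtain rfl | rfl : z = 0 ∨ z = 1 := by omega
  · exact trominoTileable_cube_erase_bottom_corner (by omega) (by omega)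
  obtain rfl | rfl : y = 0 ∨ y = 1 := by omega
  · exact (trominoTileable_cube_erase_bottom_corner (x := x) (y := 1) (by omega) (by omega)
      ).erase_cubeSymmetry isCubeSymmetry_swapYZ
  obtain rfl | rfl : x = 0 ∨ x = 1 := by omega
  · exact (trominoTileable_cube_erase_bottom_corner (x := 1) (y := 1) (by omega) (by omega)
      ).erase_cubeSymmetry isCubeSymmetry_swapXZ
  · exact isTilingCertificate_innerCellTiling.trominoTileable
end
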